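/- Let m, l ≥ 1 be integers and L₁ > 0. Let σ : [0,∞) × ℝ^m → ℝ^{m×l} (real m×l matrices, with the Frobenius norm ‖·‖) be such that s ↦ σ(s,x) is Borel measurable for each x, and for all s ≥ 0 and x₁, x₂ ∈ ℝ^m one has ‖σ(s,x₁) − σ(s,x₂)‖ ≤ L₁|x₁ − x₂| and ‖σ(s,0)‖ ≤ L₁. Suppose there exist σ̄ : ℝ^m → ℝ^{m×l} and κ₂ : (0,∞) → (0,∞) with κ₂(T) → 0 as T → ∞ such that for every T > 0 and every x ∈ ℝ^m, (1/T)∫₀^T ‖σ(s,x) − σ̄(x)‖² ds ≤ κ₂(T)(1 + |x|²). Then for all x₁, x₂ ∈ ℝ^m, ‖σ̄(x₁) − σ̄(x₂)‖² ≤ 3 L₁² |x₁ − x₂|²; in particular σ̄ is Lipschitz continuous with constant √3·L₁. -/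

import Mathlib

/-!
Fix `x₁, x₂` and a horizon `T`. For every time `s`, writing
`σ̄ x₁ - σ̄ x₂ = (σ̄ x₁ - σ s x₁) + (σ s x₁ - σ s x₂) + (σ s x₂ - σ̄ x₂)` and using
`(a + b + c)² ≤ 3 (a² + b² + c²)` bounds `‖σ̄ x₁ - σ̄ x₂‖²` by three times the sum of the three
squared norms. Averaging over `[0, T]`, the outer terms are controlled by the averaging hypothesis
and the middle one by the Lipschitz bound, so
`‖σ̄ x₁ - σ̄ x₂‖² ≤ 3 (κ₂ T (2 + ‖x₁‖² + ‖x₂‖²) + L₁² ‖x₁ - x₂‖²)`; letting `T → ∞` kills `κ₂ T`.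
-/

open MeasureTheory Filter

theorem norm_add₃_sq_le {E : Type*} [SeminormedAddCommGroup E] (a b c : E) :
    ‖a + b + c‖ ^ 2 ≤ 3 * (‖a‖ ^ 2 + ‖b‖ ^ 2 + ‖c‖ ^ 2) := by
  have h := norm_add₃_le (a := a) (b := b) (c := c)
  nlinarith [norm_nonneg (a + b + c), sq_nonneg (‖a‖ - ‖b‖), sq_nonneg (‖b‖ - ‖c‖),
    sq_nonneg (‖a‖ - ‖c‖)]

theorem norm_le_mul_one_add_norm_of_norm_sub_le {E F : Type*} [SeminormedAddCommGroup E]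
    [SeminormedAddCommGroup F] {g : E → F} {L : ℝ} {x : E} (hx : ‖g x - g 0‖ ≤ L * ‖x‖)
    (h0 : ‖g 0‖ ≤ L) : ‖g x‖ ≤ L * (1 + ‖x‖) := by
  linarith [norm_le_norm_sub_add (g x) (g 0)]

theorem intervalIntegrable_sq_norm_of_norm_le {E : Type*} [NormedAddCommGroup E] {f : ℝ → E}
    {a b C : ℝ} (hab : a ≤ b) (hf : AEStronglyMeasurable f)
    (hC : ∀ s ∈ Set.Ioc a b, ‖f s‖ ≤ C) :
    IntervalIntegrable (fun s => ‖f s‖ ^ 2) volume a b := by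
  rw [intervalIntegrable_iff_integrableOn_Ioc_of_le hab]
  refine IntegrableOn.of_bound measure_Ioc_lt_top (hf.norm.pow 2).restrict (C ^ 2) ?_
  filter_upwards [ae_restrict_mem measurableSet_Ioc] with s hs
  rw [norm_pow, norm_norm]
  exact pow_le_pow_left₀ (norm_nonneg _) (hC s hs) 2

theorem norm_sub_sq_le_of_intervalAverage {E : Type*} [NormedAddCommGroup E] {f g : ℝ → E}
    {a b : E} {T K : ℝ} (hT : 0 < T)
    (hfa : IntervalIntegrable (fun s => ‖f s - a‖ ^ 2) volume 0 T)
    (hgb : IntervalIntegrable (fun s => ‖g s - b‖ ^ 2) volume 0 T)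
    (hfg : ∀ s ∈ Set.Icc 0 T, ‖f s - g s‖ ≤ K) :
    ‖a - b‖ ^ 2 ≤ 3 * ((1 / T) * (∫ s in (0:ℝ)..T, ‖f s - a‖ ^ 2) + K ^ 2 +
      (1 / T) * (∫ s in (0:ℝ)..T, ‖g s - b‖ ^ 2)) := by
  have hpt : ∀ s ∈ Set.Icc 0 T,
      ‖a - b‖ ^ 2 ≤ 3 * (‖f s - a‖ ^ 2 + K ^ 2 + ‖g s - b‖ ^ 2) := by
    intro s hs
    calc ‖a - b‖ ^ 2 = ‖-(f s - a) + (f s - g s) + (g s - b)‖ ^ 2 := by congr 2; abel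
      _ ≤ 3 * (‖-(f s - a)‖ ^ 2 + ‖f s - g s‖ ^ 2 + ‖g s - b‖ ^ 2) := norm_add₃_sq_le _ _ _
      _ ≤ _ := by rw [norm_neg]; gcongr; exact hfg s hs
  have hint := intervalIntegral.integral_mono_on hT.le intervalIntegrable_const
    (((hfa.add intervalIntegrable_const).add hgb).const_mul 3) hpt
  rw [intervalIntegral.integral_const_mul,
    intervalIntegral.integral_add (hfa.add intervalIntegrable_const) hgb,
    intervalIntegral.integral_add hfa intervalIntegrable_const] at hint
  simp only [intervalIntegral.integral_const, sub_zero, smul_eq_mul] at hint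
  rw [← mul_le_mul_iff_right₀ hT]
  field_simp
  linarith

theorem LipschitzWith.of_norm_sub_sq_le {E F : Type*} [SeminormedAddCommGroup E]
    [SeminormedAddCommGroup F] {f : E → F} {K : ℝ} (hK : 0 ≤ K)
    (h : ∀ x y, ‖f x - f y‖ ^ 2 ≤ K ^ 2 * ‖x - y‖ ^ 2) : LipschitzWith K.toNNReal f := by
  refine LipschitzWith.of_dist_le' fun x y => ?_
  rw [dist_eq_norm, dist_eq_norm,
    ← pow_le_pow_iff_left₀ (norm_nonneg _) (by positivity) two_ne_zero, mul_pow]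
  exact h x y

theorem averaged_diffusion_lipschitz_general
    (m l : ℕ) (L₁ : ℝ)
    (σ : ℝ → EuclideanSpace ℝ (Fin m) → EuclideanSpace ℝ (Fin m × Fin l))
    (hmeas : ∀ x, Measurable fun s => σ s x)
    (hLip : ∀ s, 0 ≤ s → ∀ x₁ x₂, ‖σ s x₁ - σ s x₂‖ ≤ L₁ * ‖x₁ - x₂‖)
    (hσ0 : ∀ s, 0 ≤ s → ‖σ s 0‖ ≤ L₁)
    (σbar : EuclideanSpace ℝ (Fin m) → EuclideanSpace ℝ (Fin m × Fin l))
    (κ₂ : ℝ → ℝ)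
    (hκlim : Tendsto κ₂ atTop (nhds 0))
    (havg : ∀ T, 0 < T → ∀ x,
      (1 / T) * (∫ s in (0:ℝ)..T, ‖σ s x - σbar x‖ ^ 2) ≤ κ₂ T * (1 + ‖x‖ ^ 2)) :
    (∀ x₁ x₂, ‖σbar x₁ - σbar x₂‖ ^ 2 ≤ 3 * L₁ ^ 2 * ‖x₁ - x₂‖ ^ 2) ∧
      LipschitzWith (Real.toNNReal (Real.sqrt 3 * L₁)) σbar := by
  have hL₁ : 0 ≤ L₁ := (norm_nonneg _).trans (hσ0 0 le_rfl)
  have hint : ∀ T, 0 < T → ∀ x,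
      IntervalIntegrable (fun s => ‖σ s x - σbar x‖ ^ 2) volume 0 T := fun T hT x =>
    intervalIntegrable_sq_norm_of_norm_le hT.le
      ((hmeas x).sub measurable_const).aestronglyMeasurable (C := L₁ * (1 + ‖x‖) + ‖σbar x‖)
      fun s hs => (norm_sub_le _ _).trans <| by
        gcongr
        exact norm_le_mul_one_add_norm_of_norm_sub_le (by simpa using hLip s hs.1.le x 0)
          (hσ0 s hs.1.le)
  have hsq : ∀ x₁ x₂, ‖σbar x₁ - σbar x₂‖ ^ 2 ≤ 3 * L₁ ^ 2 * ‖x₁ - x₂‖ ^ 2 := by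
    intro x₁ x₂
    set bound := fun T => 3 * (κ₂ T * (1 + ‖x₁‖ ^ 2) + (L₁ * ‖x₁ - x₂‖) ^ 2 +
      κ₂ T * (1 + ‖x₂‖ ^ 2))
    have hT : ∀ T, 0 < T → ‖σbar x₁ - σbar x₂‖ ^ 2 ≤ bound T := fun T hT =>
      (norm_sub_sq_le_of_intervalAverage hT (hint T hT x₁) (hint T hT x₂)
        fun s hs => hLip s hs.1 x₁ x₂).trans (by
          simp only [bound]; gcongr 3 * (?_ + _ + ?_) <;> exact havg T hT _)
    have hlim : Tendsto bound atTop
        (nhds (3 * (0 * (1 + ‖x₁‖ ^ 2) + (L₁ * ‖x₁ - x₂‖) ^ 2 + 0 * (1 + ‖x₂‖ ^ 2)))) :=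
      (((hκlim.mul_const _).add_const _).add (hκlim.mul_const _)).const_mul 3
    calc ‖σbar x₁ - σbar x₂‖ ^ 2 ≤ _ := ge_of_tendsto hlim ((eventually_gt_atTop 0).mono hT)
      _ = 3 * L₁ ^ 2 * ‖x₁ - x₂‖ ^ 2 := by ring
  refine ⟨hsq, LipschitzWith.of_norm_sub_sq_le (by positivity) fun x₁ x₂ => ?_⟩
  rw [mul_pow, Real.sq_sqrt zero_le_three]
  exact hsq x₁ x₂

theorem averaged_diffusion_lipschitz
    (m l : ℕ) (hm : 1 ≤ m) (hl : 1 ≤ l) (L₁ : ℝ) (hL₁ : 0 < L₁)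
    (σ : ℝ → EuclideanSpace ℝ (Fin m) → EuclideanSpace ℝ (Fin m × Fin l))
    (hmeas : ∀ x, Measurable fun s => σ s x)
    (hLip : ∀ s, 0 ≤ s → ∀ x₁ x₂, ‖σ s x₁ - σ s x₂‖ ≤ L₁ * ‖x₁ - x₂‖)
    (hσ0 : ∀ s, 0 ≤ s → ‖σ s 0‖ ≤ L₁)
    (σbar : EuclideanSpace ℝ (Fin m) → EuclideanSpace ℝ (Fin m × Fin l))
    (κ₂ : ℝ → ℝ) (hκpos : ∀ T, 0 < T → 0 < κ₂ T)
    (hκlim : Tendsto κ₂ atTop (nhds 0))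
    (havg : ∀ T, 0 < T → ∀ x,
      (1 / T) * (∫ s in (0:ℝ)..T, ‖σ s x - σbar x‖ ^ 2) ≤ κ₂ T * (1 + ‖x‖ ^ 2)) :
    (∀ x₁ x₂, ‖σbar x₁ - σbar x₂‖ ^ 2 ≤ 3 * L₁ ^ 2 * ‖x₁ - x₂‖ ^ 2) ∧
      LipschitzWith (Real.toNNReal (Real.sqrt 3 * L₁)) σbar :=
  averaged_diffusion_lipschitz_general m l L₁ σ hmeas hLip hσ0 σbar κ₂ hκlim havg
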